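/- Let d ≥ 4 and μ(ζ) = |ζ₁|/|ζ| + |ζ| on ℝ^d \ {0}. Let E₁ = {(ξ,η) ∈ B(0,1)² : |ξ|+|η| > 3||ξ|−|η||}. Then there exists a constant C depending only on d such that for all nonnegative F, G, H ∈ L²(ℝ^d), ∫∫_{E₁} (μ(ξ+η)/(μ(ξ)μ(η))) F(ξ)G(η)H(ξ+η) dξ dη ≤ C ‖F‖_{L²} ‖G‖_{L²} ‖H‖_{L²}. -/

import Mathlib

open MeasureTheory Metric ENNReal Set

/-- The anisotropic multiplier `μ(ζ) = |ζ₁|/|ζ| + |ζ|`. -/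
noncomputable def mu {d : ℕ} [NeZero d] (ζ : EuclideanSpace ℝ (Fin d)) : ℝ :=
  |ζ 0| / ‖ζ‖ + ‖ζ‖

lemma integrableOn_abs_rpow {r : ℝ} (h : -1 < r) :
    IntegrableOn (fun t : ℝ => |t| ^ r) (Icc (-1) 1) := by
  have key : IntegrableOn (fun t : ℝ => |t| ^ r) (Icc 0 1) := by
    have h1 := (intervalIntegral.intervalIntegrable_rpow' (a := 0) (b := 1) h)
    rw [intervalIntegrable_iff_integrableOn_Icc_of_le (by norm_num)] at h1
    exact h1.congr_fun (fun t ht => by rw [abs_of_nonneg ht.1]) measurableSet_Icc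
  have hneg : IntegrableOn (fun t : ℝ => |t| ^ r) (Icc (-1) 0) := by
    have hmp := (Measure.measurePreserving_neg (volume : Measure ℝ))
    have hemb : MeasurableEmbedding (Neg.neg : ℝ → ℝ) :=
      (Homeomorph.neg ℝ).measurableEmbedding
    refine (hmp.integrableOn_comp_preimage hemb
      (f := fun t : ℝ => |t| ^ r) (s := Icc (-1) 0)).mp ?_
    have hpre : (Neg.neg : ℝ → ℝ) ⁻¹' Icc (-1) 0 = Icc 0 1 := by
      ext t
      simp only [mem_preimage, mem_Icc, neg_le, le_neg, neg_zero]
      constructor <;> intro ⟨a, b⟩ <;> constructor <;> linarith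
    rw [hpre]
    exact key.congr_fun (fun t ht => by simp [Function.comp, abs_neg]) measurableSet_Icc
  have := hneg.union key
  rwa [Icc_union_Icc_eq_Icc (by norm_num) (by norm_num)] at this

noncomputable def ee (n : ℕ) : ℝ := if n = 0 then 3/4 else if n < 4 then 5/6 else 0

noncomputable def gg (n : ℕ) (t : ℝ) : ℝ := (Icc (-1:ℝ) 1).indicator (fun t => |t| ^ (-(ee n))) t

lemma ee_nonneg (n : ℕ) : 0 ≤ ee n := by unfold ee; split <;> norm_num; split <;> norm_num

lemma ee_lt_one (n : ℕ) : ee n < 1 := by unfold ee; split <;> norm_num; split <;> norm_num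

lemma gg_nonneg (n : ℕ) (t : ℝ) : 0 ≤ gg n t := by
  unfold gg; apply Set.indicator_nonneg; intro t _; positivity

lemma measurable_gg (n : ℕ) : Measurable (gg n) :=
  ((measurable_abs.pow measurable_const).indicator measurableSet_Icc :
    Measurable ((Icc (-1:ℝ) 1).indicator fun t => |t| ^ (-(ee n))))

lemma integrable_gg (n : ℕ) : Integrable (gg n) volume := by
  have h : IntegrableOn (fun t : ℝ => |t| ^ (-(ee n))) (Icc (-1) 1) :=
    integrableOn_abs_rpow (by linarith [ee_lt_one n])
  exact h.integrable_indicator measurableSet_Icc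

lemma rpow_core {a b c e r m : ℝ} (hr : 0 < r) (ha : 0 < a) (har : a ≤ r)
    (hb : 0 < b) (hbr : b ≤ r) (hc : 0 < c) (hcr : c ≤ r) (he : 0 < e) (her : e ≤ r)
    (hm1 : a / r ≤ m) (hm2 : r ≤ m) :
    (1/m)^4 ≤ a ^ (-(3/4):ℝ) * (b ^ (-(5/6):ℝ) * (c ^ (-(5/6):ℝ) * e ^ (-(5/6):ℝ))) := by
  have hm : 0 < m := lt_of_lt_of_le hr hm2
  have step1 : (1/m : ℝ)^4 = (1/m)^((3:ℝ)/4) * (1/m)^((13:ℝ)/4) := by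
    rw [← Real.rpow_natCast (1/m) 4, ← Real.rpow_add (by positivity)]
    norm_num
  have h1m : (1/m : ℝ) ≤ r/a := by
    rw [div_le_div_iff₀ hm ha]
    have : a ≤ m * r := (div_le_iff₀ hr).mp hm1
    nlinarith
  have step2 : (1/m : ℝ)^((3:ℝ)/4) ≤ (r/a)^((3:ℝ)/4) :=
    Real.rpow_le_rpow (by positivity) h1m (by norm_num)
  have step3 : (1/m : ℝ)^((13:ℝ)/4) ≤ (1/r)^((13:ℝ)/4) :=
    Real.rpow_le_rpow (by positivity) (by gcongr) (by norm_num)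
  have step4 : (r/a : ℝ)^((3:ℝ)/4) * (1/r)^((13:ℝ)/4) = a ^ (-(3/4):ℝ) * r ^ (-(5/2):ℝ) := by
    rw [Real.div_rpow hr.le ha.le, Real.div_rpow zero_le_one hr.le, Real.one_rpow,
      Real.rpow_neg ha.le, Real.rpow_neg hr.le]
    rw [div_mul_div_comm, mul_one]
    have h13 : r ^ ((13:ℝ)/4) = r ^ ((3:ℝ)/4) * r ^ ((5:ℝ)/2) := by
      rw [← Real.rpow_add hr]; norm_num
    rw [h13]
    have p1 : (0:ℝ) < a ^ ((3:ℝ)/4) := by positivity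
    have p2 : (0:ℝ) < r ^ ((3:ℝ)/4) := by positivity
    have p3 : (0:ℝ) < r ^ ((5:ℝ)/2) := by positivity
    field_simp
  have step5 : (r : ℝ) ^ (-(5/2):ℝ) = r ^ (-(5/6):ℝ) * (r ^ (-(5/6):ℝ) * r ^ (-(5/6):ℝ)) := by
    rw [← Real.rpow_add hr, ← Real.rpow_add hr]; norm_num
  have hrb : (r:ℝ) ^ (-(5/6):ℝ) ≤ b ^ (-(5/6):ℝ) := Real.rpow_le_rpow_of_nonpos hb hbr (by norm_num)
  have hrc : (r:ℝ) ^ (-(5/6):ℝ) ≤ c ^ (-(5/6):ℝ) := Real.rpow_le_rpow_of_nonpos hc hcr (by norm_num)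
  have hre : (r:ℝ) ^ (-(5/6):ℝ) ≤ e ^ (-(5/6):ℝ) := Real.rpow_le_rpow_of_nonpos he her (by norm_num)
  calc (1/m : ℝ)^4 = (1/m)^((3:ℝ)/4) * (1/m)^((13:ℝ)/4) := step1
    _ ≤ (r/a)^((3:ℝ)/4) * (1/r)^((13:ℝ)/4) := by
        apply mul_le_mul step2 step3 (by positivity) (by positivity)
    _ = a ^ (-(3/4):ℝ) * (r ^ (-(5/6):ℝ) * (r ^ (-(5/6):ℝ) * r ^ (-(5/6):ℝ))) := by
        rw [step4, step5]
    _ ≤ a ^ (-(3/4):ℝ) * (b ^ (-(5/6):ℝ) * (c ^ (-(5/6):ℝ) * e ^ (-(5/6):ℝ))) := by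
        have h1 : (0:ℝ) ≤ a ^ (-(3/4):ℝ) := by positivity
        gcongr

lemma prod_gg_bound {d : ℕ} [NeZero d] (hd : 4 ≤ d) (η : EuclideanSpace ℝ (Fin d))
    (hball : ‖η‖ < 1) (h0 : ∀ i : Fin d, η i ≠ 0) :
    (1 / mu η) ^ 4 ≤ ∏ i, gg i.val (η i) := by
  have hηne : η ≠ 0 := fun h => h0 0 (by rw [h]; rfl)
  have hr : 0 < ‖η‖ := norm_pos_iff.mpr hηne
  have habs : ∀ i : Fin d, |η i| ≤ ‖η‖ := fun i => by
    calc |η i| = Real.sqrt (‖η i‖ ^ 2) := by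
          rw [Real.norm_eq_abs, Real.sqrt_sq_eq_abs, abs_abs]
    _ ≤ ‖η‖ := by
      rw [EuclideanSpace.norm_eq]
      apply Real.sqrt_le_sqrt
      exact Finset.single_le_sum (f := fun j => ‖η j‖ ^ 2) (fun j _ => sq_nonneg _)
        (Finset.mem_univ i)
  have hmem : ∀ i : Fin d, η i ∈ Icc (-1:ℝ) 1 := fun i => by
    have := (habs i).trans hball.le
    rw [abs_le] at this; exact this
  set i0 : Fin d := ⟨0, by omega⟩
  set i1 : Fin d := ⟨1, by omega⟩
  set i2 : Fin d := ⟨2, by omega⟩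
  set i3 : Fin d := ⟨3, by omega⟩
  have hi0 : i0 = (0 : Fin d) := by
    apply Fin.ext; simp [i0]
  set s : Finset (Fin d) := {i0, i1, i2, i3} with hs
  have hsub : ∏ i ∈ s, gg i.val (η i) = ∏ i, gg i.val (η i) := by
    apply Finset.prod_subset (Finset.subset_univ s)
    intro i _ hi
    have hival : ¬ i.val < 4 := by
      intro hlt
      apply hi
      simp only [hs, Finset.mem_insert, Finset.mem_singleton]
      interval_cases h : i.val <;>
        [exact Or.inl (Fin.ext h); exact Or.inr (Or.inl (Fin.ext h));
         exact Or.inr (Or.inr (Or.inl (Fin.ext h)));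
         exact Or.inr (Or.inr (Or.inr (Fin.ext h)))]
    have : ee i.val = 0 := by
      unfold ee
      rw [if_neg (by omega), if_neg hival]
    rw [gg, this, indicator_of_mem (hmem i)]
    norm_num
  rw [← hsub]
  have h01 : i0 ≠ i1 := by simp [i0, i1, Fin.ext_iff]
  have h02 : i0 ≠ i2 := by simp [i0, i2, Fin.ext_iff]
  have h03 : i0 ≠ i3 := by simp [i0, i3, Fin.ext_iff]
  have h12 : i1 ≠ i2 := by simp [i1, i2, Fin.ext_iff]
  have h13 : i1 ≠ i3 := by simp [i1, i3, Fin.ext_iff]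
  have h23 : i2 ≠ i3 := by simp [i2, i3, Fin.ext_iff]
  have hprod : ∏ i ∈ s, gg i.val (η i)
      = gg i0.val (η i0) * (gg i1.val (η i1) * (gg i2.val (η i2) * gg i3.val (η i3))) := by
    rw [hs]
    rw [Finset.prod_insert (by simp [h01, h02, h03]),
      Finset.prod_insert (by simp [h12, h13]),
      Finset.prod_insert (by simp [h23]), Finset.prod_singleton]
  rw [hprod]
  have g0 : gg i0.val (η i0) = |η i0| ^ (-(3/4):ℝ) := by
    rw [gg, indicator_of_mem (hmem i0)]
    norm_num [ee]
  have g1 : gg i1.val (η i1) = |η i1| ^ (-(5/6):ℝ) := by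
    rw [gg, indicator_of_mem (hmem i1)]
    norm_num [ee, i1]
  have g2 : gg i2.val (η i2) = |η i2| ^ (-(5/6):ℝ) := by
    rw [gg, indicator_of_mem (hmem i2)]
    norm_num [ee, i2]
  have g3 : gg i3.val (η i3) = |η i3| ^ (-(5/6):ℝ) := by
    rw [gg, indicator_of_mem (hmem i3)]
    norm_num [ee, i3]
  rw [g0, g1, g2, g3]
  apply rpow_core hr (abs_pos.mpr (h0 i0)) (habs i0) (abs_pos.mpr (h0 i1)) (habs i1)
    (abs_pos.mpr (h0 i2)) (habs i2) (abs_pos.mpr (h0 i3)) (habs i3) ?_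
    (le_add_of_nonneg_left (div_nonneg (abs_nonneg _) (norm_nonneg _)))
  rw [hi0]
  exact le_add_of_nonneg_right (norm_nonneg _)

lemma K_lt_top {d : ℕ} [NeZero d] (hd : 4 ≤ d) :
    ∫⁻ η in ball (0 : EuclideanSpace ℝ (Fin d)) 1,
      (ENNReal.ofReal (1 / mu η)) ^ (4:ℝ) ∂volume < ⊤ := by
  set e := (MeasurableEquiv.toLp 2 (Fin d → ℝ)).symm with he
  have hmp := EuclideanSpace.volume_preserving_symm_measurableEquiv_toLp (Fin d)
  set Q : (Fin d → ℝ) → ℝ := fun x => ∏ i, gg i.val (x i) with hQ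
  have hQint : Integrable Q volume :=
    Integrable.fin_nat_prod (𝕜 := ℝ) (fun i => integrable_gg i.val)
  have hQmeas : Measurable fun x : Fin d → ℝ => ENNReal.ofReal (Q x) :=
    (Finset.measurable_prod _ (fun i _ =>
      (measurable_gg i.val).comp (measurable_pi_apply i))).ennreal_ofReal
  have hae : ∀ᵐ η : EuclideanSpace ℝ (Fin d) ∂volume, ∀ i : Fin d, η i ≠ 0 := by
    rw [ae_all_iff]
    intro i
    have hms : MeasurableSet {x : Fin d → ℝ | x i = 0} :=
      (measurable_pi_apply i) (measurableSet_singleton 0)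
    have hnull : (volume : Measure (EuclideanSpace ℝ (Fin d))) {η | η i = 0} = 0 := by
      have hset : {η : EuclideanSpace ℝ (Fin d) | η i = 0}
          = ⇑e ⁻¹' {x : Fin d → ℝ | x i = 0} := rfl
      rw [hset, hmp.measure_preimage hms.nullMeasurableSet, volume_pi]
      exact Measure.pi_hyperplane _ i 0
    rw [ae_iff]
    simpa using hnull
  have hpt : ∀ᵐ η : EuclideanSpace ℝ (Fin d) ∂(volume.restrict (ball 0 1)),
      (ENNReal.ofReal (1 / mu η)) ^ (4:ℝ) ≤ ENNReal.ofReal (Q (⇑e η)) := by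
    refine (ae_restrict_iff' measurableSet_ball).mpr ?_
    filter_upwards [hae] with η hη hball
    have hb : ‖η‖ < 1 := by simpa [mem_ball, dist_eq_norm] using hball
    have hreal := prod_gg_bound hd η hb hη
    have h1 : (0:ℝ) ≤ 1 / mu η :=
      one_div_nonneg.mpr (add_nonneg (div_nonneg (abs_nonneg _) (norm_nonneg _)) (norm_nonneg _))
    calc (ENNReal.ofReal (1/mu η))^(4:ℝ) = ENNReal.ofReal ((1/mu η)^(4:ℝ)) :=
          ENNReal.ofReal_rpow_of_nonneg h1 (by norm_num)
      _ = ENNReal.ofReal ((1/mu η)^(4:ℕ)) := by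
          rw [show (4:ℝ) = ((4:ℕ):ℝ) by norm_num, Real.rpow_natCast]
      _ ≤ ENNReal.ofReal (Q (⇑e η)) := ENNReal.ofReal_le_ofReal hreal
  calc ∫⁻ η in ball (0 : EuclideanSpace ℝ (Fin d)) 1, (ENNReal.ofReal (1 / mu η)) ^ (4:ℝ) ∂volume
      ≤ ∫⁻ η in ball (0 : EuclideanSpace ℝ (Fin d)) 1, ENNReal.ofReal (Q (⇑e η)) ∂volume :=
        lintegral_mono_ae hpt
    _ ≤ ∫⁻ η, ENNReal.ofReal (Q (⇑e η)) ∂volume := setLIntegral_le_lintegral _ _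
    _ = ∫⁻ x, ENNReal.ofReal (Q x) ∂volume := hmp.lintegral_comp hQmeas
    _ < ⊤ := hQint.lintegral_lt_top

lemma mu_nonneg' {d : ℕ} [NeZero d] (ζ : EuclideanSpace ℝ (Fin d)) : 0 ≤ mu ζ :=
  add_nonneg (div_nonneg (abs_nonneg _) (norm_nonneg _)) (norm_nonneg _)

lemma mu_le_three {d : ℕ} [NeZero d] {ζ : EuclideanSpace ℝ (Fin d)} (h : ‖ζ‖ ≤ 2) :
    mu ζ ≤ 3 := by
  rcases eq_or_ne ζ 0 with rfl | hζ
  · simp [mu]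
  · have habs : |ζ 0| ≤ ‖ζ‖ := by
      calc |ζ 0| = Real.sqrt (‖ζ 0‖ ^ 2) := by
            rw [Real.norm_eq_abs, Real.sqrt_sq_eq_abs, abs_abs]
      _ ≤ ‖ζ‖ := by
        rw [EuclideanSpace.norm_eq]
        apply Real.sqrt_le_sqrt
        exact Finset.single_le_sum (f := fun j => ‖ζ j‖ ^ 2) (fun j _ => sq_nonneg _)
          (Finset.mem_univ 0)
    have h1 : |ζ 0| / ‖ζ‖ ≤ 1 := div_le_one_of_le₀ habs (norm_nonneg _)
    unfold mu; linarith

lemma measurable_mu {d : ℕ} [NeZero d] : Measurable (mu (d := d)) := by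
  unfold mu
  apply Measurable.add _ measurable_norm
  apply Measurable.div _ measurable_norm
  exact (by fun_prop :
    Measurable fun ζ : EuclideanSpace ℝ (Fin d) => |ζ 0|)

lemma ennreal_double (x : ℝ≥0∞) (a : ℝ) : x ^ a * x ^ a = x ^ (a * 2) := by
  rw [← sq, ← ENNReal.rpow_natCast (x ^ a) 2, ← ENNReal.rpow_mul]
  norm_num

lemma ennreal_half_mul_half (x : ℝ≥0∞) : x ^ (1/2:ℝ) * x ^ (1/2:ℝ) = x := by
  rw [ennreal_double]; norm_num

/-- For `d ≥ 4`, the trilinear functional `I₁` over the bad region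
`E₁ = {(ξ,η) ∈ B(0,1)² : |ξ|+|η| > 3||ξ|−|η||}` is bounded by `C‖F‖_{L²}‖G‖_{L²}‖H‖_{L²}`,
with `C` depending only on `d`. -/
theorem stmt5 (d : ℕ) [NeZero d] (hd : 4 ≤ d) :
    ∃ C : ℝ, 0 < C ∧
      ∀ F G H : EuclideanSpace ℝ (Fin d) → ℝ,
        Measurable F → Measurable G → Measurable H →
        (∀ x, 0 ≤ F x) → (∀ x, 0 ≤ G x) → (∀ x, 0 ≤ H x) →
        MemLp F 2 volume → MemLp G 2 volume → MemLp H 2 volume →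
        ∫⁻ p in {p : EuclideanSpace ℝ (Fin d) × EuclideanSpace ℝ (Fin d) |
            p.1 ∈ ball 0 1 ∧ p.2 ∈ ball 0 1 ∧
            ‖p.1‖ + ‖p.2‖ > 3 * |‖p.1‖ - ‖p.2‖|},
          ENNReal.ofReal (mu (p.1 + p.2) / (mu p.1 * mu p.2) * F p.1 * G p.2 * H (p.1 + p.2))
        ≤ ENNReal.ofReal C * eLpNorm F 2 volume * eLpNorm G 2 volume * eLpNorm H 2 volume := by
  classical
  set X := EuclideanSpace ℝ (Fin d)
  set s : Set X := ball 0 1 with hs_def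
  set w : X → ℝ≥0∞ := fun x => ENNReal.ofReal (1 / mu x) with hw_def
  set K : ℝ≥0∞ := ∫⁻ η in s, w η ^ (4:ℝ) ∂volume with hK_def
  have hK : K < ⊤ := K_lt_top hd
  have hKhalf : K ^ (1/2:ℝ) ≠ ⊤ := ENNReal.rpow_ne_top_of_nonneg (by norm_num) hK.ne
  refine ⟨3 * ((K ^ (1/2:ℝ)).toReal + 1), by positivity, ?_⟩
  intro F G H hFm hGm hHm hF0 hG0 hH0 hF2 hG2 hH2
  set C : ℝ := 3 * ((K ^ (1/2:ℝ)).toReal + 1) with hC_def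
  have hmu_nonneg : ∀ ζ : X, 0 ≤ mu ζ := fun ζ => mu_nonneg' ζ
  set F' : X → ℝ≥0∞ := fun x => ENNReal.ofReal (F x) with hF'_def
  set G' : X → ℝ≥0∞ := fun x => ENNReal.ofReal (G x) with hG'_def
  set H' : X → ℝ≥0∞ := fun x => ENNReal.ofReal (H x) with hH'_def
  set A : X × X → ℝ≥0∞ := fun p => F' p.1 * w p.2 * H' (p.1 + p.2) ^ (1/2:ℝ) with hA_def
  set B : X × X → ℝ≥0∞ := fun p => G' p.2 * w p.1 * H' (p.1 + p.2) ^ (1/2:ℝ) with hB_def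
  have hmw : Measurable w := (measurable_const.div measurable_mu).ennreal_ofReal
  have hmF' : Measurable F' := hFm.ennreal_ofReal
  have hmG' : Measurable G' := hGm.ennreal_ofReal
  have hmH' : Measurable H' := hHm.ennreal_ofReal
  have hmσ : Measurable fun p : X × X => p.1 + p.2 := measurable_fst.add measurable_snd
  have hmA : Measurable A :=
    ((hmF'.comp measurable_fst).mul (hmw.comp measurable_snd)).mul
      ((hmH'.comp hmσ).pow measurable_const)
  have hmB : Measurable B :=
    ((hmG'.comp measurable_snd).mul (hmw.comp measurable_fst)).mul
      ((hmH'.comp hmσ).pow measurable_const)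
  have hpq : Real.HolderConjugate 2 2 := Real.holderConjugate_iff.mpr ⟨by norm_num, by norm_num⟩
  set FF : ℝ≥0∞ := ∫⁻ x, F' x ^ (2:ℝ) ∂volume with hFF_def
  set GG : ℝ≥0∞ := ∫⁻ x, G' x ^ (2:ℝ) ∂volume with hGG_def
  set HH : ℝ≥0∞ := ∫⁻ x, H' x ^ (2:ℝ) ∂volume with hHH_def
  have hEsub : {p : X × X | p.1 ∈ ball 0 1 ∧ p.2 ∈ ball 0 1 ∧
      ‖p.1‖ + ‖p.2‖ > 3 * |‖p.1‖ - ‖p.2‖|} ⊆ s ×ˢ s := fun p hp => ⟨hp.1, hp.2.1⟩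
  -- pointwise bound
  have hpt : ∀ p ∈ s ×ˢ s,
      ENNReal.ofReal (mu (p.1 + p.2) / (mu p.1 * mu p.2) * F p.1 * G p.2 * H (p.1 + p.2))
        ≤ 3 * (A p * B p) := by
    rintro p ⟨hp1, hp2⟩
    rw [hs_def, mem_ball_zero_iff] at hp1 hp2
    have h3 : mu (p.1 + p.2) ≤ 3 := by
      apply mu_le_three
      calc ‖p.1 + p.2‖ ≤ ‖p.1‖ + ‖p.2‖ := norm_add_le _ _
        _ ≤ 2 := by linarith
    have hw1 : (0:ℝ) ≤ 1 / mu p.1 := one_div_nonneg.mpr (hmu_nonneg _)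
    have hw2 : (0:ℝ) ≤ 1 / mu p.2 := one_div_nonneg.mpr (hmu_nonneg _)
    have key : mu (p.1 + p.2) / (mu p.1 * mu p.2)
        ≤ 3 * ((1 / mu p.1) * (1 / mu p.2)) := by
      rcases eq_or_lt_of_le (mul_nonneg (hmu_nonneg p.1) (hmu_nonneg p.2)) with he | hlt
      · rw [← he, _root_.div_zero]
        positivity
      · rw [div_le_iff₀ hlt]
        have h1 : (0:ℝ) < mu p.1 := by
          rcases mul_pos_iff.mp hlt with ⟨a, _⟩ | ⟨a, b⟩
          · exact a
          · linarith [hmu_nonneg p.1]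
        have h2 : (0:ℝ) < mu p.2 := by
          rcases mul_pos_iff.mp hlt with ⟨_, b⟩ | ⟨a, b⟩
          · exact b
          · linarith [hmu_nonneg p.2]
        field_simp
        linarith
    have hreal : mu (p.1 + p.2) / (mu p.1 * mu p.2) * F p.1 * G p.2 * H (p.1 + p.2)
        ≤ 3 * ((1 / mu p.1) * (1 / mu p.2)) * F p.1 * G p.2 * H (p.1 + p.2) := by
      apply mul_le_mul_of_nonneg_right _ (hH0 _)
      apply mul_le_mul_of_nonneg_right _ (hG0 _)
      apply mul_le_mul_of_nonneg_right key (hF0 _)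
    refine le_trans (ENNReal.ofReal_le_ofReal hreal) ?_
    have hnn1 : (0:ℝ) ≤ 3 * ((1 / mu p.1) * (1 / mu p.2)) :=
      mul_nonneg (by norm_num) (mul_nonneg hw1 hw2)
    have hnn2 : (0:ℝ) ≤ 3 * ((1 / mu p.1) * (1 / mu p.2)) * F p.1 :=
      mul_nonneg hnn1 (hF0 _)
    have hnn3 : (0:ℝ) ≤ 3 * ((1 / mu p.1) * (1 / mu p.2)) * F p.1 * G p.2 :=
      mul_nonneg hnn2 (hG0 _)
    rw [ENNReal.ofReal_mul hnn3, ENNReal.ofReal_mul hnn2, ENNReal.ofReal_mul hnn1,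
      ENNReal.ofReal_mul (by norm_num : (0:ℝ) ≤ 3), ENNReal.ofReal_mul hw1,
      ENNReal.ofReal_ofNat]
    have expand : (3:ℝ≥0∞) * (A p * B p)
        = 3 * (ENNReal.ofReal (1 / mu p.1) * ENNReal.ofReal (1 / mu p.2))
            * ENNReal.ofReal (F p.1) * ENNReal.ofReal (G p.2)
            * (H' (p.1 + p.2) ^ (1/2:ℝ) * H' (p.1 + p.2) ^ (1/2:ℝ)) := by
      rw [hA_def, hB_def, hF'_def, hG'_def, hw_def]; ring
    rw [ennreal_half_mul_half] at expand
    rw [expand, hH'_def]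
  -- Cauchy-Schwarz
  have hCS : ∫⁻ p in s ×ˢ s, 3 * (A p * B p) ∂volume
      ≤ 3 * ((∫⁻ p in s ×ˢ s, A p ^ (2:ℝ) ∂volume) ^ (1/2:ℝ)
        * (∫⁻ p in s ×ˢ s, B p ^ (2:ℝ) ∂volume) ^ (1/2:ℝ)) := by
    rw [lintegral_const_mul 3 (by exact hmA.mul hmB : Measurable fun p => A p * B p)]
    apply mul_le_mul_right ?_ 3
    have := ENNReal.lintegral_mul_le_Lp_mul_Lq (volume.restrict (s ×ˢ s)) hpq
      hmA.aemeasurable hmB.aemeasurable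
    simpa using this
  -- inner bounds
  have hwk : ∀ η : X, (w η ^ (2:ℝ)) ^ (2:ℝ) = w η ^ (4:ℝ) := by
    intro η; rw [← ENNReal.rpow_mul]; norm_num
  have hHtrans : ∀ ξ : X, ∫⁻ η in s, H' (ξ + η) ^ (2:ℝ) ∂volume ≤ HH := by
    intro ξ
    calc ∫⁻ η in s, H' (ξ + η) ^ (2:ℝ) ∂volume
        ≤ ∫⁻ η, H' (ξ + η) ^ (2:ℝ) ∂volume := setLIntegral_le_lintegral _ _
      _ = HH := lintegral_add_left_eq_self (fun y => H' y ^ (2:ℝ)) ξ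
  have hGtrans : ∀ η : X, ∫⁻ ξ in s, H' (ξ + η) ^ (2:ℝ) ∂volume ≤ HH := by
    intro η
    calc ∫⁻ ξ in s, H' (ξ + η) ^ (2:ℝ) ∂volume
        ≤ ∫⁻ ξ, H' (ξ + η) ^ (2:ℝ) ∂volume := setLIntegral_le_lintegral _ _
      _ = ∫⁻ ξ, H' (η + ξ) ^ (2:ℝ) ∂volume := by
          apply lintegral_congr; intro ξ; rw [add_comm]
      _ = HH := lintegral_add_left_eq_self (fun y => H' y ^ (2:ℝ)) η
  have hinnerA : ∀ ξ : X, ∫⁻ η in s, w η ^ (2:ℝ) * H' (ξ + η) ∂volume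
      ≤ K ^ (1/2:ℝ) * HH ^ (1/2:ℝ) := by
    intro ξ
    have hcs := ENNReal.lintegral_mul_le_Lp_mul_Lq (volume.restrict s) hpq
      (f := fun η : X => w η ^ (2:ℝ)) (g := fun η : X => H' (ξ + η))
      ((hmw.pow measurable_const).aemeasurable)
      ((hmH'.comp (measurable_const.add measurable_id)).aemeasurable)
    simp only [Pi.mul_apply] at hcs
    refine le_trans hcs (mul_le_mul' ?_ ?_)
    · apply le_of_eq
      congr 1
      apply lintegral_congr
      intro η
      exact hwk η
    · exact ENNReal.rpow_le_rpow (hHtrans ξ) (by norm_num)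
  have hinnerB : ∀ η : X, ∫⁻ ξ in s, w ξ ^ (2:ℝ) * H' (ξ + η) ∂volume
      ≤ K ^ (1/2:ℝ) * HH ^ (1/2:ℝ) := by
    intro η
    have hcs := ENNReal.lintegral_mul_le_Lp_mul_Lq (volume.restrict s) hpq
      (f := fun ξ : X => w ξ ^ (2:ℝ)) (g := fun ξ : X => H' (ξ + η))
      ((hmw.pow measurable_const).aemeasurable)
      ((hmH'.comp (measurable_id.add measurable_const)).aemeasurable)
    simp only [Pi.mul_apply] at hcs
    refine le_trans hcs (mul_le_mul' ?_ ?_)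
    · apply le_of_eq
      congr 1
      apply lintegral_congr
      intro ξ
      exact hwk ξ
    · exact ENNReal.rpow_le_rpow (hGtrans η) (by norm_num)
  -- A-part
  have hA2 : ∫⁻ p in s ×ˢ s, A p ^ (2:ℝ) ∂volume ≤ FF * (K ^ (1/2:ℝ) * HH ^ (1/2:ℝ)) := by
    have hApt : ∀ p : X × X, A p ^ (2:ℝ)
        = F' p.1 ^ (2:ℝ) * (w p.2 ^ (2:ℝ) * H' (p.1 + p.2)) := by
      intro p
      rw [hA_def]
      rw [ENNReal.mul_rpow_of_nonneg _ _ (by norm_num : (0:ℝ) ≤ 2),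
        ENNReal.mul_rpow_of_nonneg _ _ (by norm_num : (0:ℝ) ≤ 2),
        ← ENNReal.rpow_mul]
      norm_num [mul_assoc]
    calc ∫⁻ p in s ×ˢ s, A p ^ (2:ℝ) ∂volume
        = ∫⁻ p in s ×ˢ s, F' p.1 ^ (2:ℝ) * (w p.2 ^ (2:ℝ) * H' (p.1 + p.2)) ∂volume :=
          lintegral_congr hApt
      _ = ∫⁻ ξ in s, ∫⁻ η in s, F' ξ ^ (2:ℝ) * (w η ^ (2:ℝ) * H' (ξ + η)) ∂volume ∂volume := by
          rw [MeasureTheory.Measure.volume_eq_prod, ← Measure.prod_restrict]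
          exact lintegral_prod _ (((hmF'.comp measurable_fst).pow measurable_const).mul
            (((hmw.comp measurable_snd).pow measurable_const).mul
              (hmH'.comp hmσ))).aemeasurable
      _ = ∫⁻ ξ in s, F' ξ ^ (2:ℝ) * ∫⁻ η in s, w η ^ (2:ℝ) * H' (ξ + η) ∂volume ∂volume := by
          apply lintegral_congr; intro ξ
          exact lintegral_const_mul _ ((hmw.pow measurable_const).mul
            (hmH'.comp (measurable_const.add measurable_id)))
      _ ≤ ∫⁻ ξ in s, F' ξ ^ (2:ℝ) * (K ^ (1/2:ℝ) * HH ^ (1/2:ℝ)) ∂volume :=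
          lintegral_mono fun ξ => mul_le_mul_right (hinnerA ξ) _
      _ = (∫⁻ ξ in s, F' ξ ^ (2:ℝ) ∂volume) * (K ^ (1/2:ℝ) * HH ^ (1/2:ℝ)) :=
          lintegral_mul_const _ (hmF'.pow measurable_const)
      _ ≤ FF * (K ^ (1/2:ℝ) * HH ^ (1/2:ℝ)) :=
          mul_le_mul_left (setLIntegral_le_lintegral _ _) _
  -- B-part
  have hB2 : ∫⁻ p in s ×ˢ s, B p ^ (2:ℝ) ∂volume ≤ GG * (K ^ (1/2:ℝ) * HH ^ (1/2:ℝ)) := by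
    have hBpt : ∀ p : X × X, B p ^ (2:ℝ)
        = G' p.2 ^ (2:ℝ) * (w p.1 ^ (2:ℝ) * H' (p.1 + p.2)) := by
      intro p
      rw [hB_def]
      rw [ENNReal.mul_rpow_of_nonneg _ _ (by norm_num : (0:ℝ) ≤ 2),
        ENNReal.mul_rpow_of_nonneg _ _ (by norm_num : (0:ℝ) ≤ 2),
        ← ENNReal.rpow_mul]
      norm_num [mul_assoc]
    calc ∫⁻ p in s ×ˢ s, B p ^ (2:ℝ) ∂volume
        = ∫⁻ p in s ×ˢ s, G' p.2 ^ (2:ℝ) * (w p.1 ^ (2:ℝ) * H' (p.1 + p.2)) ∂volume :=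
          lintegral_congr hBpt
      _ = ∫⁻ η in s, ∫⁻ ξ in s, G' η ^ (2:ℝ) * (w ξ ^ (2:ℝ) * H' (ξ + η)) ∂volume ∂volume := by
          rw [MeasureTheory.Measure.volume_eq_prod, ← Measure.prod_restrict]
          exact lintegral_prod_symm _ (((hmG'.comp measurable_snd).pow measurable_const).mul
            (((hmw.comp measurable_fst).pow measurable_const).mul
              (hmH'.comp hmσ))).aemeasurable
      _ = ∫⁻ η in s, G' η ^ (2:ℝ) * ∫⁻ ξ in s, w ξ ^ (2:ℝ) * H' (ξ + η) ∂volume ∂volume := by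
          apply lintegral_congr; intro η
          exact lintegral_const_mul _ ((hmw.pow measurable_const).mul
            (hmH'.comp (measurable_id.add measurable_const)))
      _ ≤ ∫⁻ η in s, G' η ^ (2:ℝ) * (K ^ (1/2:ℝ) * HH ^ (1/2:ℝ)) ∂volume :=
          lintegral_mono fun η => mul_le_mul_right (hinnerB η) _
      _ = (∫⁻ η in s, G' η ^ (2:ℝ) ∂volume) * (K ^ (1/2:ℝ) * HH ^ (1/2:ℝ)) :=
          lintegral_mul_const _ (hmG'.pow measurable_const)
      _ ≤ GG * (K ^ (1/2:ℝ) * HH ^ (1/2:ℝ)) :=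
          mul_le_mul_left (setLIntegral_le_lintegral _ _) _
  -- assemble
  have hsplit : ∀ x : ℝ≥0∞, (x * (K ^ (1/2:ℝ) * HH ^ (1/2:ℝ))) ^ (1/2:ℝ)
      = x ^ (1/2:ℝ) * (K ^ (1/4:ℝ) * HH ^ (1/4:ℝ)) := by
    intro x
    rw [ENNReal.mul_rpow_of_nonneg _ _ (by norm_num : (0:ℝ) ≤ 1/2),
      ENNReal.mul_rpow_of_nonneg _ _ (by norm_num : (0:ℝ) ≤ 1/2),
      ← ENNReal.rpow_mul, ← ENNReal.rpow_mul]
    norm_num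
  have hrearr : (3:ℝ≥0∞) * ((FF ^ (1/2:ℝ) * (K ^ (1/4:ℝ) * HH ^ (1/4:ℝ)))
        * (GG ^ (1/2:ℝ) * (K ^ (1/4:ℝ) * HH ^ (1/4:ℝ))))
      = (3 * K ^ (1/2:ℝ)) * (FF ^ (1/2:ℝ) * GG ^ (1/2:ℝ) * HH ^ (1/2:ℝ)) := by
    have k4 : K ^ (1/4:ℝ) * K ^ (1/4:ℝ) = K ^ (1/2:ℝ) := by
      rw [ennreal_double]; norm_num
    have h4 : HH ^ (1/4:ℝ) * HH ^ (1/4:ℝ) = HH ^ (1/2:ℝ) := by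
      rw [ennreal_double]; norm_num
    calc (3:ℝ≥0∞) * ((FF ^ (1/2:ℝ) * (K ^ (1/4:ℝ) * HH ^ (1/4:ℝ)))
          * (GG ^ (1/2:ℝ) * (K ^ (1/4:ℝ) * HH ^ (1/4:ℝ))))
        = 3 * ((K ^ (1/4:ℝ) * K ^ (1/4:ℝ)) * ((HH ^ (1/4:ℝ) * HH ^ (1/4:ℝ))
            * (FF ^ (1/2:ℝ) * GG ^ (1/2:ℝ)))) := by ring
      _ = (3 * K ^ (1/2:ℝ)) * (FF ^ (1/2:ℝ) * GG ^ (1/2:ℝ) * HH ^ (1/2:ℝ)) := by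
          rw [k4, h4]; ring
  have heL : ∀ f : X → ℝ, (∀ x, 0 ≤ f x) →
      eLpNorm f 2 volume = (∫⁻ x, ENNReal.ofReal (f x) ^ (2:ℝ) ∂volume) ^ (1/2:ℝ) := by
    intro f hf
    rw [eLpNorm_eq_lintegral_rpow_enorm_toReal (by norm_num : (2:ℝ≥0∞) ≠ 0)
      (by norm_num : (2:ℝ≥0∞) ≠ ⊤)]
    simp only [ENNReal.toReal_ofNat]
    congr 1
    apply lintegral_congr
    intro x
    rw [Real.enorm_eq_ofReal (hf x)]
  have hCbound : (3:ℝ≥0∞) * K ^ (1/2:ℝ) ≤ ENNReal.ofReal C := by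
    rw [hC_def, ENNReal.ofReal_mul (by norm_num : (0:ℝ) ≤ 3), ENNReal.ofReal_ofNat]
    apply mul_le_mul_right
    calc K ^ (1/2:ℝ) = ENNReal.ofReal ((K ^ (1/2:ℝ)).toReal) :=
          (ENNReal.ofReal_toReal hKhalf).symm
      _ ≤ ENNReal.ofReal ((K ^ (1/2:ℝ)).toReal + 1) :=
          ENNReal.ofReal_le_ofReal (le_add_of_nonneg_right zero_le_one)
  calc ∫⁻ p in {p : X × X | p.1 ∈ ball 0 1 ∧ p.2 ∈ ball 0 1 ∧
        ‖p.1‖ + ‖p.2‖ > 3 * |‖p.1‖ - ‖p.2‖|},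
        ENNReal.ofReal (mu (p.1 + p.2) / (mu p.1 * mu p.2) * F p.1 * G p.2 * H (p.1 + p.2))
        ∂volume
      ≤ ∫⁻ p in s ×ˢ s, ENNReal.ofReal
          (mu (p.1 + p.2) / (mu p.1 * mu p.2) * F p.1 * G p.2 * H (p.1 + p.2)) ∂volume :=
        lintegral_mono_set hEsub
    _ ≤ ∫⁻ p in s ×ˢ s, 3 * (A p * B p) ∂volume :=
        setLIntegral_mono (measurable_const.mul (hmA.mul hmB)) hpt
    _ ≤ 3 * ((∫⁻ p in s ×ˢ s, A p ^ (2:ℝ) ∂volume) ^ (1/2:ℝ)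
        * (∫⁻ p in s ×ˢ s, B p ^ (2:ℝ) ∂volume) ^ (1/2:ℝ)) := hCS
    _ ≤ 3 * ((FF * (K ^ (1/2:ℝ) * HH ^ (1/2:ℝ))) ^ (1/2:ℝ)
        * (GG * (K ^ (1/2:ℝ) * HH ^ (1/2:ℝ))) ^ (1/2:ℝ)) := by
        apply mul_le_mul_right
        exact mul_le_mul' (ENNReal.rpow_le_rpow hA2 (by norm_num))
          (ENNReal.rpow_le_rpow hB2 (by norm_num))
    _ = (3 * K ^ (1/2:ℝ)) * (FF ^ (1/2:ℝ) * GG ^ (1/2:ℝ) * HH ^ (1/2:ℝ)) := by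
        rw [hsplit FF, hsplit GG, hrearr]
    _ ≤ ENNReal.ofReal C * (FF ^ (1/2:ℝ) * GG ^ (1/2:ℝ) * HH ^ (1/2:ℝ)) :=
        mul_le_mul_left hCbound _
    _ = ENNReal.ofReal C * eLpNorm F 2 volume * eLpNorm G 2 volume * eLpNorm H 2 volume := by
        rw [heL F hF0, heL G hG0, heL H hH0, hFF_def, hGG_def, hHH_def]
        simp only [hF'_def, hG'_def, hH'_def]
        ring
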